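/- In a DR-SEU representation, for every state θ_t ∈ Θ_t there exists a separating history for θ_t: a history h^t = (B_0,g_0,s_0;...;B_t,g_t,s_t) without ties such that QU_{θ_{k−1}}(B_k,g_k,s_k) = {π_{qu}(θ_k)} for all k ≤ t, where (θ_0,...,θ_{t−1}) is the predecessor sequence of θ_t. -/

import Mathlib

/-!
At every period only finitely many SEUs lie in the support of the relevant kernel, and distinct
ones are not equivalent. For each ordered pair of distinct SEUs `π, π'`, two constant acts pin down
the only possible affine relation `π = a π' + b` on acts and a third act refutes it; collecting
these acts into one finite test family makes the test vectors `v_π = (π(c_k) - π(c₀))_k` of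
distinct SEUs pairwise not on the same ray. The act mixing `c₀` with the tests in weights
`ε (1 + d_k)`, `d` the unit direction of `v_π`, is worth `π(c₀) + ε (∑ v_π + ⟪d, v_π⟫)` to `π`,
so by strict Cauchy–Schwarz each SEU strictly prefers its own act. The menu of these acts has no
ties, and its choice `g_k` of `θ_k` is rationalized only by the SEU of `θ_k`.
-/

open Finset

/-- A simple lottery on `Z`. -/
def IsLottery {Z : Type*} (p : Z →₀ ℝ) : Prop :=
  (∀ z, 0 ≤ p z) ∧ p.sum (fun _ x => x) = 1

/-- `u` is an affine (expected-utility) functional on lotteries. -/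
def IsAffineOnLotteries {Z : Type*} (u : (Z →₀ ℝ) → ℝ) : Prop :=
  ∀ p q : Z →₀ ℝ, IsLottery p → IsLottery q → ∀ a : ℝ, 0 ≤ a → a ≤ 1 →
    u (a • p + (1 - a) • q) = a * u p + (1 - a) * u q

open scoped RealInnerProductSpace

section Lotteries

variable {Z : Type*}

lemma convex_setOf_isLottery : Convex ℝ {p : Z →₀ ℝ | IsLottery p} := by
  rintro p ⟨hp₀, hp₁⟩ p' ⟨hp'₀, hp'₁⟩ a b ha hb hab
  refine ⟨fun z => ?_, ?_⟩
  · simp only [Finsupp.add_apply, Finsupp.smul_apply, smul_eq_mul]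
    have := hp₀ z
    have := hp'₀ z
    positivity
  · rw [Finsupp.sum_add_index' (fun _ => rfl) (fun _ _ _ => rfl),
      Finsupp.sum_smul_index' (fun _ => rfl), Finsupp.sum_smul_index' (fun _ => rfl),
      ← Finsupp.smul_sum, ← Finsupp.smul_sum, hp₁, hp'₁]
    simpa using hab

namespace IsAffineOnLotteries

variable {u : (Z →₀ ℝ) → ℝ} (hu : IsAffineOnLotteries u)
include hu

lemma convexOn : ConvexOn ℝ {p | IsLottery p} u := by
  refine ⟨convex_setOf_isLottery, fun p hp p' hp' a b ha _ hab => ?_⟩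
  obtain rfl := eq_sub_of_add_eq' hab
  exact (hu p p' hp hp' a ha (by linarith)).le

lemma concaveOn : ConcaveOn ℝ {p | IsLottery p} u := by
  refine ⟨convex_setOf_isLottery, fun p hp p' hp' a b ha _ hab => ?_⟩
  obtain rfl := eq_sub_of_add_eq' hab
  exact (hu p p' hp hp' a ha (by linarith)).ge

lemma map_sum_smul {ι : Type*} {t : Finset ι} {w : ι → ℝ} {p : ι → Z →₀ ℝ}
    (h₀ : ∀ i ∈ t, 0 ≤ w i) (h₁ : ∑ i ∈ t, w i = 1) (hp : ∀ i ∈ t, IsLottery (p i)) :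
    u (∑ i ∈ t, w i • p i) = ∑ i ∈ t, w i * u (p i) :=
  le_antisymm (hu.convexOn.map_sum_le h₀ h₁ hp) (hu.concaveOn.le_map_sum h₀ h₁ hp)

end IsAffineOnLotteries

end Lotteries

lemma inner_div_norm_lt_norm_of_not_sameRay {E : Type*} [NormedAddCommGroup E]
    [InnerProductSpace ℝ E] {x y : E} (h : ¬SameRay ℝ x y) : ⟪y, x⟫ / ‖y‖ < ‖x‖ := by
  have hy : 0 < ‖y‖ := norm_pos_iff.2 fun hy => h (hy ▸ SameRay.zero_right x)
  rw [div_lt_iff₀ hy, mul_comm]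
  refine (real_inner_le_norm y x).lt_of_ne fun heq => h ?_
  rw [inner_eq_norm_mul_iff_real] at heq
  exact sameRay_iff_norm_smul_eq.2 heq

@[ext]
structure SEU (S Z : Type*) where
  belief : S → ℝ
  utility : (Z →₀ ℝ) → ℝ

namespace SEU

variable {S Z : Type*} [Fintype S]

def value (π : SEU S Z) (f : S → Z →₀ ℝ) : ℝ := ∑ s, π.belief s * π.utility (f s)

structure IsNondegenerate (π : SEU S Z) : Prop where
  sum_belief : ∑ s, π.belief s = 1
  affine : IsAffineOnLotteries π.utility
  nonconstant : ∃ p p', IsLottery p ∧ IsLottery p' ∧ π.utility p ≠ π.utility p'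

/-- The two SEUs represent the same preference over acts. -/
def Equivalent (π π' : SEU S Z) : Prop :=
  π.belief = π'.belief ∧
    ∃ a : ℝ, 0 < a ∧ ∃ b : ℝ, ∀ p, IsLottery p → π.utility p = a * π'.utility p + b

variable {π π' : SEU S Z}

lemma value_const (hπ : ∑ s, π.belief s = 1) (p : Z →₀ ℝ) : π.value (fun _ => p) = π.utility p := by
  rw [value, ← Finset.sum_mul, hπ, one_mul]

lemma value_update [DecidableEq S] (hπ : ∑ s, π.belief s = 1) (p p' : Z →₀ ℝ) (s : S) :
    π.value (Function.update (fun _ => p') s p) =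
      π.utility p' + π.belief s * (π.utility p - π.utility p') := by
  have hpt : ∀ s', π.belief s' * π.utility (Function.update (fun _ => p') s p s') =
      π.belief s' * π.utility p' +
        if s' = s then π.belief s * (π.utility p - π.utility p') else 0 := by
    intro s'
    by_cases h : s' = s
    · subst h; simp only [Function.update_self, if_true]; ring
    · simp [h]
  rw [value, Finset.sum_congr rfl fun s' _ => hpt s', Finset.sum_add_distrib, ← Finset.sum_mul, hπ,
    one_mul, Finset.sum_ite_eq' Finset.univ s, if_pos (Finset.mem_univ s)]

lemma value_sum_smul (hu : IsAffineOnLotteries π.utility) {ι : Type*} {t : Finset ι} {w : ι → ℝ}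
    {c : ι → S → Z →₀ ℝ} (h₀ : ∀ i ∈ t, 0 ≤ w i) (h₁ : ∑ i ∈ t, w i = 1)
    (hc : ∀ i ∈ t, ∀ s, IsLottery (c i s)) :
    π.value (∑ i ∈ t, w i • c i) = ∑ i ∈ t, w i * π.value (c i) := by
  simp only [value, Finset.sum_apply, Pi.smul_apply,
    hu.map_sum_smul h₀ h₁ fun i hi => hc i hi _, Finset.mul_sum]
  rw [Finset.sum_comm]
  exact Finset.sum_congr rfl fun _ _ => Finset.sum_congr rfl fun _ _ => by ring

/-- For `a = 0` the relation would make `π.utility` constant; for `a > 0`, constant acts give the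
affine relation of the utilities and acts differing in one state give equal beliefs. -/
lemma exists_value_ne_affine (hπ : π.IsNondegenerate) (hπ' : π'.IsNondegenerate)
    (h : ¬π.Equivalent π') {a : ℝ} (ha : 0 ≤ a) (b : ℝ) :
    ∃ f : S → Z →₀ ℝ, (∀ s, IsLottery (f s)) ∧ π.value f ≠ a * π'.value f + b := by
  classical
  by_contra! hfit
  have hconst : ∀ p, IsLottery p → π.utility p = a * π'.utility p + b := fun p hp => by
    simpa only [value_const hπ.sum_belief, value_const hπ'.sum_belief] using
      hfit (fun _ => p) fun _ => hp
  rcases ha.eq_or_lt with rfl | ha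
  · obtain ⟨p, p', hp, hp', hne⟩ := hπ.nonconstant
    exact hne (by rw [hconst p hp, hconst p' hp', zero_mul, zero_mul])
  obtain ⟨p, p', hp, hp', hne⟩ := hπ'.nonconstant
  refine h ⟨funext fun s => ?_, a, ha, b, hconst⟩
  have hs := hfit (Function.update (fun _ => p') s p) fun s' => by
    by_cases h : s' = s
    · subst h; simpa using hp
    · simpa [Function.update_of_ne h] using hp'
  rw [value_update hπ.sum_belief, value_update hπ'.sum_belief, hconst p hp, hconst p' hp'] at hs
  have hne' : a * (π'.utility p - π'.utility p') ≠ 0 := mul_ne_zero ha.ne' (sub_ne_zero.2 hne)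
  exact mul_right_cancel₀ hne' (by linear_combination hs)

/-- Two constant acts pin down the only candidate `(a, b)`; a third act refutes it. -/
lemma exists_three_acts_value_ne_affine (hπ : π.IsNondegenerate) (hπ' : π'.IsNondegenerate)
    (h : ¬π.Equivalent π') :
    ∃ c : Fin 3 → S → Z →₀ ℝ, (∀ n s, IsLottery (c n s)) ∧ π'.value (c 0) ≠ π'.value (c 1) ∧
      ∀ a, 0 ≤ a → ∀ b, ∃ n, π.value (c n) ≠ a * π'.value (c n) + b := by
  obtain ⟨p, p', hp, hp', hne⟩ := hπ'.nonconstant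
  set a₀ := (π.utility p - π.utility p') / (π'.utility p - π'.utility p')
  obtain ⟨f, hf, hfne⟩ : ∃ f : S → Z →₀ ℝ, (∀ s, IsLottery (f s)) ∧
      (0 ≤ a₀ → π.value f ≠ a₀ * π'.value f + (π.utility p - a₀ * π'.utility p)) := by
    by_cases ha₀ : 0 ≤ a₀
    · obtain ⟨f, hf, hfne⟩ := exists_value_ne_affine hπ hπ' h ha₀ (π.utility p - a₀ * π'.utility p)
      exact ⟨f, hf, fun _ => hfne⟩
    · exact ⟨fun _ => p, fun _ => hp, fun h => absurd h ha₀⟩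
  refine ⟨![fun _ => p, fun _ => p', f], ?_, ?_, fun a ha b => ?_⟩
  · intro n
    fin_cases n
    exacts [fun _ => hp, fun _ => hp', hf]
  · simpa [value_const hπ'.sum_belief] using hne
  by_contra! hfit
  have h0 := hfit 0
  have h1 := hfit 1
  simp only [Matrix.cons_val_zero, Matrix.cons_val_one, value_const hπ.sum_belief,
    value_const hπ'.sum_belief] at h0 h1
  have ha₀ : a = a₀ := by
    rw [eq_div_iff (sub_ne_zero.2 hne)]
    linarith
  have hb : π.utility p - a₀ * π'.utility p = b := by rw [← ha₀]; linarith
  exact hfne (ha₀ ▸ ha) (by rw [hb, ← ha₀]; simpa using hfit 2)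

section

variable {K : Type*} [Fintype K]

def testVector (c₀ : S → Z →₀ ℝ) (c : K → S → Z →₀ ℝ) (π : SEU S Z) : EuclideanSpace ℝ K :=
  WithLp.toLp 2 fun k => π.value (c k) - π.value c₀

/-- `none` indexes the base act `c₀`, which takes the weight left over by `α`. -/
noncomputable def mixAct (c₀ : S → Z →₀ ℝ) (c : K → S → Z →₀ ℝ) (α : K → ℝ) : S → Z →₀ ℝ :=
  ∑ o : Option K, o.elim (1 - ∑ k, α k) α • o.elim c₀ c

variable {c₀ : S → Z →₀ ℝ} {c : K → S → Z →₀ ℝ} {α : K → ℝ}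

omit [Fintype K] in
lemma not_sameRay_testVector (hne : ∃ k k', π'.value (c k) ≠ π'.value (c k'))
    (hfit : ∀ a, 0 ≤ a → ∀ b, ∃ k, π.value (c k) ≠ a * π'.value (c k) + b) :
    ¬SameRay ℝ (testVector c₀ c π) (testVector c₀ c π') := by
  intro hray
  obtain ⟨k, k', hkk'⟩ := hne
  have hv : testVector c₀ c π' ≠ 0 := fun hv => hkk' <| by
    have h := congr_arg (fun v : EuclideanSpace ℝ K => v k - v k') hv
    simp only [testVector, PiLp.zero_apply, sub_zero] at h
    linarith
  obtain ⟨a, ha, hray⟩ := hray.exists_nonneg_right hv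
  obtain ⟨k, hk⟩ := hfit a ha (π.value c₀ - a * π'.value c₀)
  have h := congr_arg (fun v : EuclideanSpace ℝ K => v k) hray
  simp only [testVector, PiLp.smul_apply, smul_eq_mul] at h
  exact hk (by linarith)

variable (hα₀ : ∀ k, 0 ≤ α k) (hα₁ : ∑ k, α k ≤ 1) (hc₀ : ∀ s, IsLottery (c₀ s))
  (hc : ∀ k s, IsLottery (c k s))
include hα₀ hα₁ hc₀ hc

omit [Fintype S] in
lemma isLottery_mixAct (s : S) : IsLottery (mixAct c₀ c α s) := by
  rw [mixAct, Finset.sum_apply]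
  refine convex_setOf_isLottery.sum_mem (fun o _ => ?_) (by simp [Fintype.sum_option]) fun o _ => ?_
  · cases o
    exacts [sub_nonneg.2 hα₁, hα₀ _]
  · cases o
    exacts [hc₀ s, hc _ s]

lemma value_mixAct (hu : IsAffineOnLotteries π.utility) :
    π.value (mixAct c₀ c α) = π.value c₀ + ∑ k, α k * testVector c₀ c π k := by
  rw [mixAct, value_sum_smul hu (fun o _ => ?_) (by simp [Fintype.sum_option]) fun o _ => ?_]
  · simp only [Fintype.sum_option, Option.elim_none, Option.elim_some, testVector, mul_sub,
      Finset.sum_sub_distrib, ← Finset.sum_mul]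
    ring
  · cases o
    exacts [sub_nonneg.2 hα₁, hα₀ _]
  · cases o
    exacts [hc₀, hc _]

end

section

variable {K : Type*} [Fintype K]

/-- `ε (1 + dₖ)` for the unit direction `d` of `v`; `ε = 1 / (2 (#K + 1))` makes the weights
nonnegative with total at most one. -/
noncomputable def directionWeight (v : EuclideanSpace ℝ K) (k : K) : ℝ :=
  (1 + v k / ‖v‖) / (2 * (Fintype.card K + 1))

lemma abs_apply_div_norm_le_one (v : EuclideanSpace ℝ K) (k : K) : |v k / ‖v‖| ≤ 1 := by
  rw [abs_div, abs_norm]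
  exact div_le_one_of_le₀ (by simpa using PiLp.norm_apply_le v k) (norm_nonneg v)

lemma directionWeight_nonneg (v : EuclideanSpace ℝ K) (k : K) : 0 ≤ directionWeight v k := by
  have := (abs_le.1 (abs_apply_div_norm_le_one v k)).1
  unfold directionWeight
  apply div_nonneg <;> [linarith; positivity]

lemma sum_directionWeight_le_one (v : EuclideanSpace ℝ K) : ∑ k, directionWeight v k ≤ 1 := by
  unfold directionWeight
  rw [← Finset.sum_div, div_le_one (by positivity)]
  calc ∑ k, (1 + v k / ‖v‖) ≤ ∑ _k : K, (2 : ℝ) :=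
        Finset.sum_le_sum fun k _ => by linarith [(abs_le.1 (abs_apply_div_norm_le_one v k)).2]
    _ ≤ 2 * (Fintype.card K + 1) := by
        rw [Finset.sum_const, Finset.card_univ, nsmul_eq_mul]
        linarith

lemma sum_directionWeight_mul (v w : EuclideanSpace ℝ K) :
    ∑ k, directionWeight v k * w k = (∑ k, w k + ⟪v, w⟫ / ‖v‖) / (2 * (Fintype.card K + 1)) := by
  have hk : ∀ k, directionWeight v k * w k = (w k + w k * v k / ‖v‖) / (2 * (Fintype.card K + 1)) :=
    fun k => by unfold directionWeight; ring
  simp only [hk, ← Finset.sum_div, Finset.sum_add_distrib, PiLp.inner_apply, RCLike.inner_apply,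
    conj_trivial]

noncomputable def menuAct (c₀ : S → Z →₀ ℝ) (c : K → S → Z →₀ ℝ) (π : SEU S Z) : S → Z →₀ ℝ :=
  mixAct c₀ c (directionWeight (testVector c₀ c π))

variable {c₀ : S → Z →₀ ℝ} {c : K → S → Z →₀ ℝ} (hc₀ : ∀ s, IsLottery (c₀ s))
  (hc : ∀ k s, IsLottery (c k s))
include hc₀ hc

lemma isLottery_menuAct (s : S) : IsLottery (menuAct c₀ c π s) :=
  isLottery_mixAct (directionWeight_nonneg _) (sum_directionWeight_le_one _) hc₀ hc s

lemma value_menuAct (hu : IsAffineOnLotteries π.utility) :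
    π.value (menuAct c₀ c π') = π.value c₀ +
      (∑ k, testVector c₀ c π k + ⟪testVector c₀ c π', testVector c₀ c π⟫ / ‖testVector c₀ c π'‖) /
        (2 * (Fintype.card K + 1)) := by
  rw [menuAct, value_mixAct (directionWeight_nonneg _) (sum_directionWeight_le_one _) hc₀ hc hu,
    sum_directionWeight_mul]

lemma value_menuAct_lt (hu : IsAffineOnLotteries π.utility)
    (h : ¬SameRay ℝ (testVector c₀ c π) (testVector c₀ c π')) :
    π.value (menuAct c₀ c π') < π.value (menuAct c₀ c π) := by
  rw [value_menuAct hc₀ hc hu, value_menuAct hc₀ hc hu, real_inner_self_eq_norm_mul_norm,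
    mul_self_div_self]
  gcongr
  exact inner_div_norm_lt_norm_of_not_sameRay h

end

theorem exists_strictly_preferred_acts (A : Finset (SEU S Z))
    (hA : ∀ π ∈ A, π.IsNondegenerate) (hsep : ∀ π ∈ A, ∀ π' ∈ A, π ≠ π' → ¬π.Equivalent π') :
    ∃ G : SEU S Z → S → Z →₀ ℝ, (∀ π ∈ A, ∀ s, IsLottery (G π s)) ∧
      ∀ π ∈ A, ∀ π' ∈ A, π' ≠ π → π.value (G π') < π.value (G π) := by
  obtain rfl | ⟨π₀, hπ₀⟩ := A.eq_empty_or_nonempty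
  · exact ⟨fun _ _ => 0, by simp, by simp⟩
  obtain ⟨p₀, -, hp₀, -, -⟩ := (hA π₀ hπ₀).nonconstant
  have hwit : ∀ π π' : A, ∃ w : Fin 3 → S → Z →₀ ℝ, (∀ n s, IsLottery (w n s)) ∧
      (π ≠ π' → (π' : SEU S Z).value (w 0) ≠ (π' : SEU S Z).value (w 1) ∧
        ∀ a, 0 ≤ a → ∀ b, ∃ n, (π : SEU S Z).value (w n) ≠ a * (π' : SEU S Z).value (w n) + b) := by
    intro π π'
    by_cases h : π = π'
    · exact ⟨fun _ _ => p₀, fun _ _ => hp₀, fun h' => absurd h h'⟩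
    · obtain ⟨w, hw, hsepw⟩ := exists_three_acts_value_ne_affine (hA π π.2) (hA π' π'.2)
        (hsep π π.2 π' π'.2 (Subtype.coe_injective.ne h))
      exact ⟨w, hw, fun _ => hsepw⟩
  choose w hw hsepw using hwit
  set c : A × A × Fin 3 → S → Z →₀ ℝ := fun k => w k.1 k.2.1 k.2.2
  have hc₀ : ∀ s, IsLottery ((fun _ => p₀ : S → Z →₀ ℝ) s) := fun _ => hp₀
  have hc : ∀ k s, IsLottery (c k s) := fun k => hw k.1 k.2.1 k.2.2
  refine ⟨menuAct (fun _ => p₀) c, fun _ _ => isLottery_menuAct hc₀ hc,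
    fun π hπ π' hπ' hne => value_menuAct_lt hc₀ hc (hA π hπ).affine ?_⟩
  have hne' : (⟨π, hπ⟩ : A) ≠ ⟨π', hπ'⟩ := fun h => hne (congr_arg Subtype.val h).symm
  obtain ⟨hval, hfit⟩ := hsepw ⟨π, hπ⟩ ⟨π', hπ'⟩ hne'
  exact not_sameRay_testVector ⟨(⟨π, hπ⟩, ⟨π', hπ'⟩, 0), (⟨π, hπ⟩, ⟨π', hπ'⟩, 1), hval⟩
    fun a ha b => let ⟨n, hn⟩ := hfit a ha b; ⟨(⟨π, hπ⟩, ⟨π', hπ'⟩, n), hn⟩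

theorem exists_separating_menu {ι : Type*} [Fintype ι] (σ : ι → SEU S Z) (P : ι → Prop)
    (hσ : ∀ i, P i → (σ i).IsNondegenerate)
    (hsep : ∀ i j, P i → P j → σ i = σ j ∨ ¬(σ i).Equivalent (σ j)) :
    ∃ (B : Finset (S → Z →₀ ℝ)) (F : ι → S → Z →₀ ℝ),
      (∀ i, P i → F i ∈ B) ∧ (∀ f ∈ B, ∀ s, IsLottery (f s)) ∧
      (∀ i, P i → ∀ f ∈ B, (σ i).value f ≤ (σ i).value (F i)) ∧
      (∀ i, P i → ∀ j, P j → (∀ f ∈ B, (σ j).value f ≤ (σ j).value (F i)) → σ j = σ i) ∧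
      (∀ i, P i → ∃! f, f ∈ B ∧ ∀ h ∈ B, (σ i).value h ≤ (σ i).value f) := by
  classical
  set A := (Finset.univ.filter P).image σ
  have hmem : ∀ i, P i → σ i ∈ A := fun i hi => Finset.mem_image_of_mem σ (by simpa using hi)
  have hA : ∀ π ∈ A, ∃ i, P i ∧ σ i = π := fun π hπ => by simpa [A] using hπ
  obtain ⟨G, hG, hGlt⟩ := exists_strictly_preferred_acts A
    (fun π hπ => by obtain ⟨i, hi, rfl⟩ := hA π hπ; exact hσ i hi)
    (fun π hπ π' hπ' hne => by
      obtain ⟨i, hi, rfl⟩ := hA π hπ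
      obtain ⟨j, hj, rfl⟩ := hA π' hπ'
      exact (hsep i j hi hj).resolve_left hne)
  have hbest : ∀ i, P i → ∀ f ∈ A.image G, (σ i).value f ≤ (σ i).value (G (σ i)) := by
    intro i hi f hf
    obtain ⟨π, hπ, rfl⟩ := Finset.mem_image.1 hf
    obtain rfl | hne := eq_or_ne π (σ i)
    exacts [le_rfl, (hGlt _ (hmem i hi) π hπ hne).le]
  have hreveal : ∀ i, P i → ∀ π ∈ A,
      (∀ f ∈ A.image G, (σ i).value f ≤ (σ i).value (G π)) → π = σ i := by
    intro i hi π hπ hopt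
    by_contra hne
    exact (hGlt _ (hmem i hi) π hπ hne).not_ge (hopt _ (Finset.mem_image_of_mem G (hmem i hi)))
  refine ⟨A.image G, fun i => G (σ i), fun i hi => Finset.mem_image_of_mem G (hmem i hi), ?_,
    hbest, fun i hi j hj hopt => (hreveal j hj (σ i) (hmem i hi) hopt).symm,
    fun i hi => ⟨G (σ i), ⟨Finset.mem_image_of_mem G (hmem i hi), hbest i hi⟩, ?_⟩⟩
  · intro f hf
    obtain ⟨π, hπ, rfl⟩ := Finset.mem_image.1 hf
    exact hG π hπ
  · rintro f ⟨hf, hopt⟩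
    obtain ⟨π, hπ, rfl⟩ := Finset.mem_image.1 hf
    rw [hreveal i hi π hπ hopt]

end SEU

def kernelSupport {Θ : ℕ → Type*} (ψ0 : Θ 0 → ℝ) (ψ : ∀ t, Θ t → Θ (t + 1) → ℝ) (θ : ∀ k, Θ k) :
    ∀ k, Θ k → Prop
  | 0, x => ψ0 x ≠ 0
  | k + 1, x => ψ k (θ k) x ≠ 0

theorem separating_history_exists_general
    {Θ Sp Z : ℕ → Type*} [∀ t, Fintype (Θ t)] [∀ t, Fintype (Sp t)]
    (πq : ∀ t, Θ t → Sp t → ℝ) (πu : ∀ t, Θ t → (Z t →₀ ℝ) → ℝ) (πs : ∀ t, Θ t → Sp t)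
    (ψ0 : Θ 0 → ℝ) (ψ : ∀ t, Θ t → Θ (t + 1) → ℝ)
    -- DR-SEU 1: each state carries a non-constant SEU with belief a probability
    (hqprob : ∀ t (x : Θ t), (∀ s, 0 ≤ πq t x s) ∧ (∑ s, πq t x s) = 1)
    (haff : ∀ t (x : Θ t), IsAffineOnLotteries (πu t x))
    (hnc : ∀ t (x : Θ t), ∃ p p', IsLottery p ∧ IsLottery p' ∧ πu t x p ≠ πu t x p')
    -- within each support, two states either carry literally the same SEU pair or
    -- represent distinct SEU preferences (so separating menus exist)
    (hsep0 : ∀ x y : Θ 0, ψ0 x ≠ 0 → ψ0 y ≠ 0 →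
      (πq 0 x = πq 0 y ∧ πu 0 x = πu 0 y) ∨
      ¬(πq 0 x = πq 0 y ∧ ∃ a : ℝ, 0 < a ∧ ∃ b : ℝ,
          ∀ p, IsLottery p → πu 0 x p = a * πu 0 y p + b))
    (hsep : ∀ t (w : Θ t) (x y : Θ (t + 1)), ψ t w x ≠ 0 → ψ t w y ≠ 0 →
      (πq (t + 1) x = πq (t + 1) y ∧ πu (t + 1) x = πu (t + 1) y) ∨
      ¬(πq (t + 1) x = πq (t + 1) y ∧ ∃ a : ℝ, 0 < a ∧ ∃ b : ℝ,
          ∀ p, IsLottery p → πu (t + 1) x p = a * πu (t + 1) y p + b))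
    (t : ℕ)
    -- θ_t with its predecessor chain
    (θ : ∀ k, Θ k)
    (hθ0 : ψ0 (θ 0) ≠ 0)
    (hθlink : ∀ k, k < t → ψ k (θ k) (θ (k + 1)) ≠ 0) :
    ∃ (B : ∀ k, Finset (Sp k → Z k →₀ ℝ)) (g : ∀ k, Sp k → Z k →₀ ℝ),
      (∀ k, k ≤ t → g k ∈ B k) ∧
      (∀ k, k ≤ t → ∀ f ∈ B k, ∀ s, IsLottery (f s)) ∧
      -- g_k is optimal in B_k for the SEU of θ_k
      (∀ k, k ≤ t → ∀ f ∈ B k,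
        (∑ s, πq k (θ k) s * πu k (θ k) (f s)) ≤ ∑ s, πq k (θ k) s * πu k (θ k) (g k s)) ∧
      -- QU_{θ_{k−1}}(B_k, g_k, π_s(θ_k)) = {π_qu(θ_k)}: period 0
      (∀ x : Θ 0, ψ0 x ≠ 0 → πs 0 x = πs 0 (θ 0) →
        (∀ f ∈ B 0, (∑ s, πq 0 x s * πu 0 x (f s)) ≤ ∑ s, πq 0 x s * πu 0 x (g 0 s)) →
        πq 0 x = πq 0 (θ 0) ∧ πu 0 x = πu 0 (θ 0)) ∧
      -- and later periods
      (∀ k, k < t → ∀ x : Θ (k + 1), ψ k (θ k) x ≠ 0 → πs (k + 1) x = πs (k + 1) (θ (k + 1)) →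
        (∀ f ∈ B (k + 1),
          (∑ s, πq (k + 1) x s * πu (k + 1) x (f s)) ≤
            ∑ s, πq (k + 1) x s * πu (k + 1) x (g (k + 1) s)) →
        πq (k + 1) x = πq (k + 1) (θ (k + 1)) ∧ πu (k + 1) x = πu (k + 1) (θ (k + 1))) ∧
      -- the history is without ties: every SEU in the support of the relevant kernel
      -- has a unique maximizer in the menu
      (∀ x : Θ 0, ψ0 x ≠ 0 →
        ∃! f : Sp 0 → Z 0 →₀ ℝ, f ∈ B 0 ∧
          ∀ h ∈ B 0, (∑ s, πq 0 x s * πu 0 x (h s)) ≤ ∑ s, πq 0 x s * πu 0 x (f s)) ∧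
      (∀ k, k < t → ∀ x : Θ (k + 1), ψ k (θ k) x ≠ 0 →
        ∃! f : Sp (k + 1) → Z (k + 1) →₀ ℝ, f ∈ B (k + 1) ∧
          ∀ h ∈ B (k + 1),
            (∑ s, πq (k + 1) x s * πu (k + 1) x (h s)) ≤
              ∑ s, πq (k + 1) x s * πu (k + 1) x (f s)) := by
  classical
  have hsepP : ∀ k (x y : Θ k), kernelSupport ψ0 ψ θ k x → kernelSupport ψ0 ψ θ k y →
      SEU.mk (πq k x) (πu k x) = ⟨πq k y, πu k y⟩ ∨
        ¬SEU.Equivalent ⟨πq k x, πu k x⟩ ⟨πq k y, πu k y⟩ := by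
    rintro (_ | k) x y hx hy
    exacts [(hsep0 x y hx hy).imp_left SEU.ext_iff.2,
      (hsep k (θ k) x y hx hy).imp_left SEU.ext_iff.2]
  choose B F hF hB hFbest hFreveal hFunique using fun k =>
    SEU.exists_separating_menu (fun x => ⟨πq k x, πu k x⟩) (kernelSupport ψ0 ψ θ k)
      (fun x _ => ⟨(hqprob k x).2, haff k x, hnc k x⟩) (hsepP k)
  have hθ : ∀ k ≤ t, kernelSupport ψ0 ψ θ k (θ k) := by
    rintro (_ | k) hk
    exacts [hθ0, hθlink k hk]
  refine ⟨B, fun k => F k (θ k), fun k hk => hF k _ (hθ k hk), fun k _ => hB k,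
    fun k hk => hFbest k _ (hθ k hk), fun x hx _ hopt => SEU.ext_iff.1 (hFreveal 0 _ hθ0 x hx hopt),
    fun k hk x hx _ hopt => SEU.ext_iff.1 (hFreveal (k + 1) _ (hθ (k + 1) hk) x hx hopt),
    hFunique 0, fun k _ => hFunique (k + 1)⟩

/-- Existence of separating histories: for every state `θ_t` of a DR-SEU
representation (with its predecessor chain `θ_0,…,θ_{t−1}`) there is a history
`h^t = (B_0,g_0,s_0;…;B_t,g_t,s_t)` without ties such that at every period `k ≤ t`
the only SEU in the support of the relevant kernel that can rationalize the choice
`g_k` from `B_k` together with the realized objective state is the SEU of `θ_k`. -/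
theorem separating_history_exists
    {Θ Sp Z : ℕ → Type*} [∀ t, Fintype (Θ t)] [∀ t, Fintype (Sp t)]
    (πq : ∀ t, Θ t → Sp t → ℝ) (πu : ∀ t, Θ t → (Z t →₀ ℝ) → ℝ) (πs : ∀ t, Θ t → Sp t)
    (ψ0 : Θ 0 → ℝ) (ψ : ∀ t, Θ t → Θ (t + 1) → ℝ)
    -- DR-SEU 1: each state carries a non-constant SEU with belief a probability,
    -- and the realized objective state lies in the support of the belief
    (hqprob : ∀ t (x : Θ t), (∀ s, 0 ≤ πq t x s) ∧ (∑ s, πq t x s) = 1)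
    (haff : ∀ t (x : Θ t), IsAffineOnLotteries (πu t x))
    (hnc : ∀ t (x : Θ t), ∃ p p', IsLottery p ∧ IsLottery p' ∧ πu t x p ≠ πu t x p')
    (hssupp : ∀ t (x : Θ t), 0 < πq t x (πs t x))
    -- within each support, two states either carry literally the same SEU pair or
    -- represent distinct SEU preferences (so separating menus exist)
    (hsep0 : ∀ x y : Θ 0, ψ0 x ≠ 0 → ψ0 y ≠ 0 →
      (πq 0 x = πq 0 y ∧ πu 0 x = πu 0 y) ∨
      ¬(πq 0 x = πq 0 y ∧ ∃ a : ℝ, 0 < a ∧ ∃ b : ℝ,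
          ∀ p, IsLottery p → πu 0 x p = a * πu 0 y p + b))
    (hsep : ∀ t (w : Θ t) (x y : Θ (t + 1)), ψ t w x ≠ 0 → ψ t w y ≠ 0 →
      (πq (t + 1) x = πq (t + 1) y ∧ πu (t + 1) x = πu (t + 1) y) ∨
      ¬(πq (t + 1) x = πq (t + 1) y ∧ ∃ a : ℝ, 0 < a ∧ ∃ b : ℝ,
          ∀ p, IsLottery p → πu (t + 1) x p = a * πu (t + 1) y p + b))
    (t : ℕ)
    -- θ_t with its predecessor chain
    (θ : ∀ k, Θ k)
    (hθ0 : ψ0 (θ 0) ≠ 0)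
    (hθlink : ∀ k, k < t → ψ k (θ k) (θ (k + 1)) ≠ 0) :
    ∃ (B : ∀ k, Finset (Sp k → Z k →₀ ℝ)) (g : ∀ k, Sp k → Z k →₀ ℝ),
      (∀ k, k ≤ t → g k ∈ B k) ∧
      (∀ k, k ≤ t → ∀ f ∈ B k, ∀ s, IsLottery (f s)) ∧
      -- g_k is optimal in B_k for the SEU of θ_k
      (∀ k, k ≤ t → ∀ f ∈ B k,
        (∑ s, πq k (θ k) s * πu k (θ k) (f s)) ≤ ∑ s, πq k (θ k) s * πu k (θ k) (g k s)) ∧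
      -- QU_{θ_{k−1}}(B_k, g_k, π_s(θ_k)) = {π_qu(θ_k)}: period 0
      (∀ x : Θ 0, ψ0 x ≠ 0 → πs 0 x = πs 0 (θ 0) →
        (∀ f ∈ B 0, (∑ s, πq 0 x s * πu 0 x (f s)) ≤ ∑ s, πq 0 x s * πu 0 x (g 0 s)) →
        πq 0 x = πq 0 (θ 0) ∧ πu 0 x = πu 0 (θ 0)) ∧
      -- and later periods
      (∀ k, k < t → ∀ x : Θ (k + 1), ψ k (θ k) x ≠ 0 → πs (k + 1) x = πs (k + 1) (θ (k + 1)) →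
        (∀ f ∈ B (k + 1),
          (∑ s, πq (k + 1) x s * πu (k + 1) x (f s)) ≤
            ∑ s, πq (k + 1) x s * πu (k + 1) x (g (k + 1) s)) →
        πq (k + 1) x = πq (k + 1) (θ (k + 1)) ∧ πu (k + 1) x = πu (k + 1) (θ (k + 1))) ∧
      -- the history is without ties: every SEU in the support of the relevant kernel
      -- has a unique maximizer in the menu
      (∀ x : Θ 0, ψ0 x ≠ 0 →
        ∃! f : Sp 0 → Z 0 →₀ ℝ, f ∈ B 0 ∧
          ∀ h ∈ B 0, (∑ s, πq 0 x s * πu 0 x (h s)) ≤ ∑ s, πq 0 x s * πu 0 x (f s)) ∧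
      (∀ k, k < t → ∀ x : Θ (k + 1), ψ k (θ k) x ≠ 0 →
        ∃! f : Sp (k + 1) → Z (k + 1) →₀ ℝ, f ∈ B (k + 1) ∧
          ∀ h ∈ B (k + 1),
            (∑ s, πq (k + 1) x s * πu (k + 1) x (h s)) ≤
              ∑ s, πq (k + 1) x s * πu (k + 1) x (f s)) :=
  separating_history_exists_general πq πu πs ψ0 ψ hqprob haff hnc hsep0 hsep t θ hθ0 hθlink
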